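/- Let S be a dense subsemigroup of ((0,∞),+) and B ⊆ S. Then B is central near zero (i.e., B belongs to some idempotent in K(O⁺(S))) if and only if there exists a dynamical system (X, ⟨T_s⟩_{s∈S}), points x, y ∈ X, and a neighborhood U of y such that x and y are proximal near zero, y is uniformly recurrent near zero, and B = {s ∈ S : T_s(x) ∈ U}. -/
import Mathlib


open Filter Topology Set

noncomputable section

/-- The extension of `+` on a discrete semigroup to its Stone–Čech compactification
(space of ultrafilters): `A ∈ p + q` iff `{x : -x + A ∈ q} ∈ p`. -/
def uadd {α : Type} [Add α] (p q : Ultrafilter α) : Ultrafilter α :=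
  p.bind fun a => q.map (a + ·)

/-- `O⁺(S) = {p ∈ βS : for all ε > 0, S ∩ (0,ε) ∈ p}`. -/
def Oplus (S : AddSubsemigroup ℝ) : Set (Ultrafilter S) :=
  {p | ∀ ε : ℝ, 0 < ε → {x : S | (x : ℝ) < ε} ∈ p}

def IsLeftIdealIn {α : Type} [Add α] (T L : Set (Ultrafilter α)) : Prop :=
  L.Nonempty ∧ L ⊆ T ∧ ∀ p ∈ T, ∀ q ∈ L, uadd p q ∈ L

def IsMinimalLeftIdealIn {α : Type} [Add α] (T L : Set (Ultrafilter α)) : Prop :=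
  IsLeftIdealIn T L ∧ ∀ L', IsLeftIdealIn T L' → L' ⊆ L → L' = L

/-- The smallest ideal `K(O⁺(S))`, described as the union of all minimal left ideals. -/
def KOplus (S : AddSubsemigroup ℝ) : Set (Ultrafilter S) :=
  {p | ∃ L, IsMinimalLeftIdealIn (Oplus S) L ∧ p ∈ L}

/-- A dynamical system over an additive semigroup. -/
structure DynSys (σ : Type) [Add σ] where
  X : Type
  [ts : TopologicalSpace X]
  [cs : CompactSpace X]
  [t2 : T2Space X]
  T : σ → X → X
  cont : ∀ s, Continuous (T s)
  comp : ∀ s t, T s ∘ T t = T (s + t)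

attribute [instance] DynSys.ts DynSys.cs DynSys.t2

/-- `T_p(x) = p-lim_{s ∈ S} T_s(x)`. -/
def DynSys.Tp {σ : Type} [Add σ] (D : DynSys σ) (p : Ultrafilter σ) (x : D.X) : D.X :=
  (p.map fun s => D.T s x).lim

/-- `B` is syndetic near zero. -/
def syndeticNearZero (S : AddSubsemigroup ℝ) (A : Set S) : Prop :=
  ∀ ε : ℝ, 0 < ε → ∃ F : Finset S, F.Nonempty ∧ (∀ t ∈ F, (t : ℝ) < ε) ∧
    ∃ δ : ℝ, 0 < δ ∧ ∀ s : S, (s : ℝ) < δ → ∃ t ∈ F, t + s ∈ A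

def uniformlyRecurrentNearZero (S : AddSubsemigroup ℝ) (D : DynSys S) (x : D.X) : Prop :=
  ∀ W ∈ nhds x, syndeticNearZero S {s : S | D.T s x ∈ W}

/-- `x` and `y` are proximal near zero. -/
def proximalNearZero (S : AddSubsemigroup ℝ) (D : DynSys S) (x y : D.X) : Prop :=
  ∀ U ∈ nhdsSet (Set.diagonal D.X), ∀ ε : ℝ, 0 < ε →
    ∃ s : S, (s : ℝ) < ε ∧ (D.T s x, D.T s y) ∈ U

/-- `A` is piecewise syndetic near zero. -/
def piecewiseSyndeticNearZero (S : AddSubsemigroup ℝ) (A : Set S) : Prop :=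
  ∃ (F : ℕ → Finset S) (δ : ℕ → ℝ),
    (∀ n : ℕ, (F n).Nonempty ∧ (∀ t ∈ F n, (t : ℝ) < 1 / (n + 1)) ∧
      0 < δ n ∧ δ n < 1 / (n + 1)) ∧
    ∀ G : Finset S, ∀ μ : ℝ, 0 < μ → ∃ x : S, (x : ℝ) < μ ∧
      ∀ n : ℕ, ∀ g ∈ G, (g : ℝ) < δ n → ∃ t ∈ F n, t + (g + x) ∈ A

/-- `A` is a J-set near zero. -/
def JSetNearZero (S : AddSubsemigroup ℝ) (A : Set S) : Prop :=
  ∀ F : Finset (ℕ → S), F.Nonempty →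
    (∀ f ∈ F, Tendsto (fun n => ((f n : S) : ℝ)) atTop (nhds 0)) →
    ∀ δ : ℝ, 0 < δ → ∃ a : S, (a : ℝ) < δ ∧ ∃ H : Finset ℕ, H.Nonempty ∧
      ∀ f ∈ F, ∃ b ∈ A, (b : ℝ) = (a : ℝ) + ∑ t ∈ H, ((f t : S) : ℝ)

def J0 (S : AddSubsemigroup ℝ) : Set (Ultrafilter S) :=
  {p | p ∈ Oplus S ∧ ∀ A ∈ p, JSetNearZero S A}

/-- jointly intermittently uniformly recurrent near zero. -/
def JIUR0 (S : AddSubsemigroup ℝ) (D : DynSys S) (x y : D.X) : Prop :=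
  ∀ U ∈ nhds y, piecewiseSyndeticNearZero S {s : S | D.T s x ∈ U ∧ D.T s y ∈ U}

/-- jointly intermittently almost uniformly recurrent near zero. -/
def JIAUR0 (S : AddSubsemigroup ℝ) (D : DynSys S) (x y : D.X) : Prop :=
  ∀ U ∈ nhds y, JSetNearZero S {s : S | D.T s x ∈ U ∧ D.T s y ∈ U}
/-! ### Auxiliary lemmas -/

lemma mem_uadd {α : Type} [Add α] {p q : Ultrafilter α} {A : Set α} :
    A ∈ uadd p q ↔ {a | {b | a + b ∈ A} ∈ q} ∈ p := by
  change A ∈ Filter.bind ↑p (fun a => ↑(q.map (a + ·))) ↔ _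
  rw [Filter.mem_bind]
  constructor
  · rintro ⟨t, ht, h⟩
    exact Filter.mem_of_superset ht fun a ha => by
      simpa [Ultrafilter.mem_map, Set.preimage] using h a ha
  · intro h
    exact ⟨_, h, fun a ha => by simpa [Ultrafilter.mem_map, Set.preimage] using ha⟩

section UaddBasics

attribute [local instance] Ultrafilter.add Ultrafilter.addSemigroup

lemma uadd_eq {α : Type} [AddSemigroup α] (p q : Ultrafilter α) : uadd p q = p + q := by
  refine Ultrafilter.coe_inj.mp (Filter.ext fun A => ?_)
  rw [Ultrafilter.mem_coe, mem_uadd]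
  exact ((Ultrafilter.eventually_add p q (· ∈ A)).symm : _)

lemma uadd_assoc {α : Type} [AddSemigroup α] (p q r : Ultrafilter α) :
    uadd (uadd p q) r = uadd p (uadd q r) := by
  rw [uadd_eq, uadd_eq, uadd_eq, uadd_eq]; exact add_assoc p q r

lemma continuous_uadd_left {α : Type} [AddSemigroup α] (q : Ultrafilter α) :
    Continuous (fun p => uadd p q) := by
  have : (fun p : Ultrafilter α => uadd p q) = (· + q) := funext fun p => uadd_eq p q
  rw [this]; exact Ultrafilter.continuous_add_left q

lemma exists_uadd_idem {α : Type} [AddSemigroup α] {s : Set (Ultrafilter α)}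
    (hne : s.Nonempty) (hcl : IsClosed s)
    (hadd : ∀ p ∈ s, ∀ q ∈ s, uadd p q ∈ s) : ∃ u ∈ s, uadd u u = u := by
  obtain ⟨u, hu, hidem⟩ := exists_idempotent_in_compact_add_subsemigroup
    (fun r => Ultrafilter.continuous_add_left r) s hne hcl.isCompact
    (fun p hp q hq => by rw [← uadd_eq]; exact hadd p hp q hq)
  exact ⟨u, hu, by rw [uadd_eq]; exact hidem⟩

end UaddBasics

lemma ultra_mem_nhds {α : Type} {p : Ultrafilter α} {W : Set (Ultrafilter α)} :
    W ∈ nhds p ↔ ∃ A ∈ p, {q : Ultrafilter α | A ∈ q} ⊆ W := by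
  rw [ultrafilterBasis_is_basis.mem_nhds_iff]
  constructor
  · rintro ⟨t, ⟨A, rfl⟩, hp, hsub⟩; exact ⟨A, hp, hsub⟩
  · rintro ⟨A, hA, hsub⟩; exact ⟨_, ⟨A, rfl⟩, hA, hsub⟩

lemma continuous_umap {α β : Type} (g : α → β) : Continuous (Ultrafilter.map g) := by
  refine ultrafilterBasis_is_basis.continuous_iff.2 <| Set.forall_mem_range.mpr fun A => ?_
  have : Ultrafilter.map g ⁻¹' {u | A ∈ u} = {u : Ultrafilter α | g ⁻¹' A ∈ u} := by
    ext u; exact Ultrafilter.mem_map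
  rw [this]; exact ultrafilter_isOpen_basic _

lemma exists_ultrafilter_directed {α : Type} {ι : Type} [Nonempty ι] (C : ι → Set α)
    (hne : ∀ i, (C i).Nonempty) (hdir : ∀ i j, ∃ k, C k ⊆ C i ∩ C j) :
    ∃ u : Ultrafilter α, ∀ i, C i ∈ u := by
  have hd : Directed (· ≥ ·) (fun i => (𝓟 (C i) : Filter α)) := by
    intro i j
    obtain ⟨k, hk⟩ := hdir i j
    exact ⟨k, le_principal_iff.mpr (mem_principal.mpr (hk.trans inter_subset_left)),
      le_principal_iff.mpr (mem_principal.mpr (hk.trans inter_subset_right))⟩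
  have : (⨅ i, (𝓟 (C i) : Filter α)).NeBot := by
    apply iInf_neBot_of_directed' hd
    intro i; exact principal_neBot_iff.mpr (hne i)
  obtain ⟨u, hu⟩ := Ultrafilter.exists_le (⨅ i, (𝓟 (C i) : Filter α))
  exact ⟨u, fun i => (hu.trans (iInf_le _ i)) (mem_principal_self _)⟩

/-! ### Dynamics along ultrafilters -/

section TpLemmas

variable {σ : Type} [Add σ] (D : DynSys σ)

lemma Tp_tendsto (p : Ultrafilter σ) (x : D.X) :
    Tendsto (fun s => D.T s x) ↑p (nhds (D.Tp p x)) := by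
  have := Ultrafilter.le_nhds_lim (p.map fun s => D.T s x)
  rwa [Ultrafilter.coe_map] at this

lemma Tp_eq {p : Ultrafilter σ} {x : D.X} {z : D.X}
    (h : Tendsto (fun s => D.T s x) ↑p (nhds z)) : D.Tp p x = z :=
  tendsto_nhds_unique (Tp_tendsto D p x) h

lemma T_apply_eq (a b : σ) (x : D.X) : D.T a (D.T b x) = D.T (a + b) x :=
  congrFun (D.comp a b) x

lemma tendsto_T_uadd (p q : Ultrafilter σ) (x : D.X) :
    Tendsto (fun s => D.T s x) ↑(uadd p q) (nhds (D.Tp p (D.Tp q x))) := by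
  intro W hW
  rw [mem_map, Ultrafilter.mem_coe, mem_uadd]
  have h1 : {a : σ | D.T a (D.Tp q x) ∈ interior W} ∈ p :=
    (Tp_tendsto D p (D.Tp q x)) (isOpen_interior.mem_nhds (mem_interior_iff_mem_nhds.mpr hW))
  refine Filter.mem_of_superset h1 fun a ha => ?_
  have h2 : Tendsto (fun b => D.T a (D.T b x)) ↑q (nhds (D.T a (D.Tp q x))) :=
    ((D.cont a).continuousAt).tendsto.comp (Tp_tendsto D q x)
  have h3 : {b : σ | D.T a (D.T b x) ∈ interior W} ∈ q :=
    h2 (isOpen_interior.mem_nhds ha)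
  refine Filter.mem_of_superset h3 fun b hb => ?_
  have : D.T a (D.T b x) ∈ W := interior_subset hb
  rwa [T_apply_eq] at this

lemma Tp_uadd (p q : Ultrafilter σ) (x : D.X) :
    D.Tp (uadd p q) x = D.Tp p (D.Tp q x) :=
  Tp_eq D (tendsto_T_uadd D p q x)

lemma continuous_Tp (x : D.X) : Continuous (fun p : Ultrafilter σ => D.Tp p x) := by
  rw [continuous_iff_continuousAt]
  intro p
  rw [ContinuousAt]
  intro V hV
  obtain ⟨C, hCmem, hCclosed, hCV⟩ := exists_mem_nhds_isClosed_subset hV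
  set A := {s : σ | D.T s x ∈ interior C} with hA
  have hAp : A ∈ p := (Tp_tendsto D p x)
    (isOpen_interior.mem_nhds (mem_interior_iff_mem_nhds.mpr hCmem))
  have key : ∀ q : Ultrafilter σ, A ∈ q → D.Tp q x ∈ C := by
    intro q hAq
    by_contra hq
    have h2 : {s : σ | D.T s x ∈ Cᶜ} ∈ q :=
      (Tp_tendsto D q x) (hCclosed.isOpen_compl.mem_nhds hq)
    obtain ⟨s, hs1, hs2⟩ := Ultrafilter.nonempty_of_mem (inter_mem hAq h2)
    exact hs2 (interior_subset hs1)
  rw [mem_map]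
  have : {q : Ultrafilter σ | A ∈ q} ∈ nhds p :=
    (ultrafilter_isOpen_basic A).mem_nhds hAp
  exact Filter.mem_of_superset this fun q hq => hCV (key q hq)

end TpLemmas

/-! ### `Oplus` structure theory -/

variable {S : AddSubsemigroup ℝ}

lemma S_exists_small (hdense : Set.Ioi (0 : ℝ) ⊆ closure (S : Set ℝ)) {ε : ℝ} (hε : 0 < ε) :
    ∃ x : S, (x : ℝ) < ε := by
  have h2 : ε / 2 ∈ closure (S : Set ℝ) := hdense (by simpa using half_pos hε)
  rw [Metric.mem_closure_iff] at h2
  obtain ⟨b, hbS, hb⟩ := h2 (ε / 2) (half_pos hε)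
  refine ⟨⟨b, hbS⟩, ?_⟩
  have := abs_lt.mp (by simpa [Real.dist_eq] using hb)
  linarith [this.1, this.2]

lemma oplus_nonempty (hdense : Set.Ioi (0 : ℝ) ⊆ closure (S : Set ℝ)) :
    (Oplus S).Nonempty := by
  have : ∀ n : ℕ, ∃ x : S, (x : ℝ) < 1 / (n + 1) := fun n =>
    S_exists_small hdense (by positivity)
  choose f hf using this
  refine ⟨(Ultrafilter.of atTop).map f, fun ε hε => ?_⟩
  obtain ⟨N, hN⟩ := exists_nat_gt (1 / ε)
  have : {n : ℕ | N ≤ n} ∈ Ultrafilter.of (atTop : Filter ℕ) :=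
    (Ultrafilter.of_le _) (mem_atTop N)
  rw [Ultrafilter.mem_map]
  refine Filter.mem_of_superset this fun n hn => ?_
  have h1 : 1 / ((n : ℝ) + 1) ≤ 1 / ((N : ℝ) + 1) := by
    apply one_div_le_one_div_of_le (by positivity)
    exact_mod_cast Nat.succ_le_succ hn
  have h2 : 1 / ((N : ℝ) + 1) < ε := by
    rw [div_lt_iff₀ (by positivity)]
    rw [div_lt_iff₀ hε] at hN
    nlinarith
  exact lt_of_lt_of_le (lt_of_lt_of_le (hf n) h1) h2.le

lemma oplus_closed : IsClosed (Oplus S) := by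
  have : Oplus S = ⋂ ε ∈ {ε : ℝ | 0 < ε}, {p : Ultrafilter S | {x : S | (x : ℝ) < ε} ∈ p} := by
    ext p; simp [Oplus]
  rw [this]
  exact isClosed_biInter fun ε _ => ultrafilter_isClosed_basic _

lemma oplus_add {p q : Ultrafilter S} (hp : p ∈ Oplus S) (hq : q ∈ Oplus S) :
    uadd p q ∈ Oplus S := by
  intro ε hε
  rw [mem_uadd]
  refine Filter.mem_of_superset (hp (ε / 2) (half_pos hε)) fun a ha => ?_
  refine Filter.mem_of_superset (hq (ε / 2) (half_pos hε)) fun b hb => ?_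
  have : ((a + b : S) : ℝ) = (a : ℝ) + b := rfl
  simp only [mem_setOf_eq] at *
  rw [this]; linarith

lemma image_left_ideal {v : Ultrafilter S} (hv : v ∈ Oplus S) :
    IsLeftIdealIn (Oplus S) ((fun p => uadd p v) '' Oplus S) ∧
      IsClosed ((fun p => uadd p v) '' Oplus S) := by
  constructor
  · refine ⟨⟨uadd v v, ⟨v, hv, rfl⟩⟩, ?_, ?_⟩
    · rintro _ ⟨p, hp, rfl⟩; exact oplus_add hp hv
    · rintro p hp _ ⟨r, hr, rfl⟩
      exact ⟨uadd p r, oplus_add hp hr, (uadd_assoc p r v)⟩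
  · have hcomp : IsCompact (Oplus S) := oplus_closed.isCompact
    exact (hcomp.image (continuous_uadd_left v)).isClosed

lemma image_subset_ideal {v : Ultrafilter S} {L : Set (Ultrafilter S)}
    (hL : IsLeftIdealIn (Oplus S) L) (hvL : v ∈ L) :
    (fun p => uadd p v) '' Oplus S ⊆ L := by
  rintro _ ⟨p, hp, rfl⟩; exact hL.2.2 p hp v hvL

lemma exists_minimal_closed_left_ideal {L0 : Set (Ultrafilter S)}
    (h0 : IsLeftIdealIn (Oplus S) L0) (hc0 : IsClosed L0) :
    ∃ L ⊆ L0, IsMinimalLeftIdealIn (Oplus S) L ∧ IsClosed L := by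
  set 𝒞 : Set (Set (Ultrafilter S)) :=
    {L | L ⊆ L0 ∧ IsClosed L ∧ IsLeftIdealIn (Oplus S) L} with h𝒞
  have hchains : ∀ c ⊆ 𝒞, IsChain (· ⊆ ·) c → c.Nonempty → ∃ lb ∈ 𝒞, ∀ s ∈ c, lb ⊆ s := by
    intro c hc hchain hne
    refine ⟨⋂₀ c, ⟨?_, ?_, ?_⟩, fun L hL => sInter_subset_of_mem hL⟩
    · obtain ⟨L, hL⟩ := hne; exact (sInter_subset_of_mem hL).trans (hc hL).1
    · exact isClosed_sInter fun L hL => (hc hL).2.1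
    · constructor
      · obtain ⟨L1, hL1⟩ := hne
        haveI : Nonempty c := ⟨⟨L1, hL1⟩⟩
        apply IsCompact.nonempty_sInter_of_directed_nonempty_isCompact_isClosed
        · intro U hU V hV
          rcases eq_or_ne U V with rfl | hne'
          · exact ⟨U, hU, Set.Subset.rfl, Set.Subset.rfl⟩
          rcases hchain hU hV hne' with h | h
          · exact ⟨U, hU, Set.Subset.rfl, h⟩
          · exact ⟨V, hV, h, Set.Subset.rfl⟩
        · exact fun U hU => (hc hU).2.2.1
        · exact fun U hU => (hc hU).2.1.isCompact
        · exact fun U hU => (hc hU).2.1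
      refine ⟨?_, ?_⟩
      · obtain ⟨L, hL⟩ := hne
        exact (sInter_subset_of_mem hL).trans (hc hL).2.2.2.1
      · intro p hp q hq
        exact mem_sInter.mpr fun L hL => (hc hL).2.2.2.2 p hp q (mem_sInter.mp hq L hL)
  obtain ⟨M, hML0, hMmin⟩ := zorn_superset_nonempty 𝒞 hchains L0 ⟨le_refl L0, hc0, h0⟩
  obtain ⟨hML0', hMclosed, hMideal⟩ := hMmin.prop
  refine ⟨M, hML0, ⟨hMideal, ?_⟩, hMclosed⟩
  intro L' hL' hsub
  obtain ⟨v, hv⟩ := hL'.1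
  have hvO : v ∈ Oplus S := hL'.2.1 hv
  have h1 := image_left_ideal hvO
  have h2 : (fun p => uadd p v) '' Oplus S ⊆ L' := image_subset_ideal hL' hv
  have h3 : (fun p => uadd p v) '' Oplus S ∈ 𝒞 :=
    ⟨(h2.trans hsub).trans hML0', h1.2, h1.1⟩
  have h4 : (fun p => uadd p v) '' Oplus S = M :=
    hMmin.eq_of_subset h3 (h2.trans hsub)
  exact subset_antisymm hsub (h4 ▸ h2)

lemma syndetic_of_minimal (hdense : Set.Ioi (0 : ℝ) ⊆ closure (S : Set ℝ))
    {L : Set (Ultrafilter S)} (hL : IsMinimalLeftIdealIn (Oplus S) L)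
    {u : Ultrafilter S} (hu : u ∈ L) {A : Set S} (hA : A ∈ u) :
    syndeticNearZero S {s : S | {b : S | s + b ∈ A} ∈ u} := by
  set Bs : Set S := {s : S | {b : S | s + b ∈ A} ∈ u} with hBs
  by_contra hsyn
  rw [syndeticNearZero] at hsyn
  push_neg at hsyn
  obtain ⟨ε, hε, hbad⟩ := hsyn
  let ι := {F : Finset S // F.Nonempty ∧ ∀ t ∈ F, (t : ℝ) < ε} × {δ : ℝ // 0 < δ}
  obtain ⟨a0, ha0⟩ := S_exists_small hdense hε
  haveI : Nonempty ι := ⟨⟨⟨{a0}, Finset.singleton_nonempty a0,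
    fun t ht => by rwa [Finset.mem_singleton.mp ht]⟩, ⟨1, one_pos⟩⟩⟩
  let C : ι → Set S := fun i =>
    {s : S | (s : ℝ) < i.2.1 ∧ ∀ t ∈ i.1.1, t + s ∉ Bs}
  have hne : ∀ i, (C i).Nonempty := by
    rintro ⟨⟨F, hFne, hFε⟩, ⟨δ, hδ⟩⟩
    obtain ⟨s, hs1, hs2⟩ := hbad F hFne hFε δ hδ
    exact ⟨s, hs1, hs2⟩
  have hdir : ∀ i j, ∃ k, C k ⊆ C i ∩ C j := by
    rintro ⟨⟨F, hFne, hFε⟩, ⟨δ, hδ⟩⟩ ⟨⟨F', hFne', hFε'⟩, ⟨δ', hδ'⟩⟩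
    refine ⟨⟨⟨F ∪ F', hFne.mono Finset.subset_union_left, fun t ht => ?_⟩,
      ⟨min δ δ', lt_min hδ hδ'⟩⟩, fun s hs => ⟨⟨?_, ?_⟩, ⟨?_, ?_⟩⟩⟩
    · rcases Finset.mem_union.mp ht with h | h
      · exact hFε t h
      · exact hFε' t h
    · exact lt_of_lt_of_le hs.1 (min_le_left δ δ')
    · exact fun t ht => hs.2 t (Finset.mem_union_left _ ht)
    · exact lt_of_lt_of_le hs.1 (min_le_right δ δ')
    · exact fun t ht => hs.2 t (Finset.mem_union_right _ ht)
  obtain ⟨q, hq⟩ := exists_ultrafilter_directed C hne hdir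
  have hqO : q ∈ Oplus S := by
    intro ε' hε'
    have := hq ⟨⟨{a0}, Finset.singleton_nonempty a0,
      fun t ht => by rwa [Finset.mem_singleton.mp ht]⟩, ⟨ε', hε'⟩⟩
    exact Filter.mem_of_superset this fun s hs => hs.1
  have huO : u ∈ Oplus S := hL.1.2.1 hu
  have hquL : uadd q u ∈ L := hL.1.2.2 q hqO u hu
  have hL' := image_left_ideal (oplus_add hqO huO)
  have hLeq : (fun p => uadd p (uadd q u)) '' Oplus S = L :=
    hL.2 _ hL'.1 (image_subset_ideal hL.1 hquL)
  have huim : u ∈ (fun p => uadd p (uadd q u)) '' Oplus S := hLeq ▸ hu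
  obtain ⟨p, hpO, hpu⟩ := huim
  have hAp : A ∈ uadd p (uadd q u) := by
    have : uadd p (uadd q u) = u := hpu
    rw [this]; exact hA
  rw [mem_uadd] at hAp
  have hint := (Filter.inter_mem hAp (hpO ε hε) : _)
  obtain ⟨a, haE, haε⟩ := Ultrafilter.nonempty_of_mem hint
  rw [mem_setOf_eq, mem_uadd] at haE
  have hD := hq ⟨⟨{a}, Finset.singleton_nonempty a,
    fun t ht => by rwa [Finset.mem_singleton.mp ht]⟩, ⟨1, one_pos⟩⟩
  obtain ⟨c, hcE, hcD⟩ := Ultrafilter.nonempty_of_mem (Filter.inter_mem haE hD)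
  have h1 : a + c ∉ Bs := hcD.2 a (Finset.mem_singleton_self a)
  apply h1
  rw [hBs, mem_setOf_eq]
  have : {d : S | c + d ∈ {b : S | a + b ∈ A}} ∈ u := hcE
  refine Filter.mem_of_superset this fun d hd => ?_
  simp only [mem_setOf_eq] at hd ⊢
  rwa [add_assoc]

lemma syndeticNearZero_mono {A A' : Set S} (h : A ⊆ A')
    (hA : syndeticNearZero S A) : syndeticNearZero S A' := by
  intro ε hε
  obtain ⟨F, h1, h2, δ, h3, h4⟩ := hA ε hε
  exact ⟨F, h1, h2, δ, h3, fun s hs =>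
    let ⟨t, ht, ht2⟩ := h4 s hs; ⟨t, ht, h ht2⟩⟩

lemma ur_step {D : DynSys S} {y : D.X} (hur : uniformlyRecurrentNearZero S D y)
    {q : Ultrafilter S} (hq : q ∈ Oplus S) :
    ∃ r ∈ Oplus S, D.Tp (uadd r q) y = y := by
  let ι := {W : Set D.X // W ∈ nhds y} × {ε : ℝ // 0 < ε}
  haveI : Nonempty ι := ⟨⟨univ, univ_mem⟩, ⟨1, one_pos⟩⟩
  let C : ι → Set S := fun i =>
    {t : S | (t : ℝ) < i.2.1 ∧ {b : S | t + b ∈ {s : S | D.T s y ∈ i.1.1}} ∈ q}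
  have hne : ∀ i, (C i).Nonempty := by
    rintro ⟨⟨W, hW⟩, ⟨ε, hε⟩⟩
    obtain ⟨F, hFne, hFε, δ, hδ, hret⟩ := hur W hW ε hε
    have hsub : {s : S | (s : ℝ) < δ} ⊆
        ⋃ t ∈ (F : Set S), {s : S | t + s ∈ {s : S | D.T s y ∈ W}} := by
      intro s hs
      obtain ⟨t, htF, ht⟩ := hret s hs
      exact mem_biUnion htF ht
    have hmem : (⋃ t ∈ (F : Set S), {s : S | t + s ∈ {s : S | D.T s y ∈ W}}) ∈ q :=
      Filter.mem_of_superset (hq δ hδ) hsub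
    obtain ⟨t, htF, ht⟩ := (Ultrafilter.finite_biUnion_mem_iff (F.finite_toSet)).mp hmem
    exact ⟨t, hFε t htF, ht⟩
  have hdir : ∀ i j, ∃ k, C k ⊆ C i ∩ C j := by
    rintro ⟨⟨W, hW⟩, ⟨ε, hε⟩⟩ ⟨⟨W', hW'⟩, ⟨ε', hε'⟩⟩
    refine ⟨⟨⟨W ∩ W', inter_mem hW hW'⟩, ⟨min ε ε', lt_min hε hε'⟩⟩, ?_⟩
    rintro t ⟨ht1, ht2⟩
    constructor
    · exact ⟨lt_of_lt_of_le ht1 (min_le_left _ _),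
        Filter.mem_of_superset ht2 fun b hb => hb.1⟩
    · exact ⟨lt_of_lt_of_le ht1 (min_le_right _ _),
        Filter.mem_of_superset ht2 fun b hb => hb.2⟩
  obtain ⟨r, hr⟩ := exists_ultrafilter_directed C hne hdir
  have hrO : r ∈ Oplus S := by
    intro ε hε
    exact Filter.mem_of_superset (hr ⟨⟨univ, univ_mem⟩, ⟨ε, hε⟩⟩) fun t ht => ht.1
  refine ⟨r, hrO, Tp_eq D ?_⟩
  intro W hW
  rw [mem_map, Ultrafilter.mem_coe, mem_uadd]
  exact Filter.mem_of_superset (hr ⟨⟨W, hW⟩, ⟨1, one_pos⟩⟩) fun t ht => ht.2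

lemma prox_step {D : DynSys S} {x y : D.X} (hprox : proximalNearZero S D x y) :
    ∃ p ∈ Oplus S, D.Tp p x = D.Tp p y := by
  let ι := {V : Set (D.X × D.X) // V ∈ nhdsSet (Set.diagonal D.X)} × {ε : ℝ // 0 < ε}
  haveI : Nonempty ι := ⟨⟨univ, Filter.univ_mem⟩, ⟨1, one_pos⟩⟩
  let C : ι → Set S := fun i =>
    {s : S | (s : ℝ) < i.2.1 ∧ (D.T s x, D.T s y) ∈ i.1.1}
  have hne : ∀ i, (C i).Nonempty := by
    rintro ⟨⟨V, hV⟩, ⟨ε, hε⟩⟩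
    obtain ⟨s, hs1, hs2⟩ := hprox V hV ε hε
    exact ⟨s, hs1, hs2⟩
  have hdir : ∀ i j, ∃ k, C k ⊆ C i ∩ C j := by
    rintro ⟨⟨V, hV⟩, ⟨ε, hε⟩⟩ ⟨⟨V', hV'⟩, ⟨ε', hε'⟩⟩
    refine ⟨⟨⟨V ∩ V', inter_mem hV hV'⟩, ⟨min ε ε', lt_min hε hε'⟩⟩, ?_⟩
    rintro s ⟨hs1, hs2⟩
    exact ⟨⟨lt_of_lt_of_le hs1 (min_le_left _ _), hs2.1⟩,
      ⟨lt_of_lt_of_le hs1 (min_le_right _ _), hs2.2⟩⟩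
  obtain ⟨p, hp⟩ := exists_ultrafilter_directed C hne hdir
  have hpO : p ∈ Oplus S := by
    intro ε hε
    exact Filter.mem_of_superset (hp ⟨⟨univ, Filter.univ_mem⟩, ⟨ε, hε⟩⟩) fun s hs => hs.1
  refine ⟨p, hpO, ?_⟩
  by_contra hne'
  have hsep : SeparatedNhds {(D.Tp p x, D.Tp p y)} (Set.diagonal D.X) := by
    apply SeparatedNhds.of_isCompact_isCompact_isClosed isCompact_singleton
      (isClosed_diagonal.isCompact) isClosed_diagonal
    rw [disjoint_singleton_left]
    exact fun h => hne' h
  obtain ⟨U1, V1, hU1o, hV1o, hU1m, hV1m, hdisj⟩ := hsep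
  have hVnhds : V1 ∈ nhdsSet (Set.diagonal D.X) := hV1o.mem_nhdsSet.mpr hV1m
  have h1 : {s : S | (D.T s x, D.T s y) ∈ V1} ∈ p :=
    Filter.mem_of_superset (hp ⟨⟨V1, hVnhds⟩, ⟨1, one_pos⟩⟩) fun s hs => hs.2
  have htend : Tendsto (fun s : S => (D.T s x, D.T s y)) ↑p
      (nhds (D.Tp p x, D.Tp p y)) :=
    (Tp_tendsto D p x).prodMk_nhds (Tp_tendsto D p y)
  have h2 : {s : S | (D.T s x, D.T s y) ∈ U1} ∈ p :=
    htend (hU1o.mem_nhds (hU1m rfl))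
  obtain ⟨s, hs1, hs2⟩ := Ultrafilter.nonempty_of_mem (inter_mem h1 h2)
  exact disjoint_left.mp hdisj hs2 hs1

/-! ### The forward dynamical system -/

def optAct {S : AddSubsemigroup ℝ} (s : S) : Option S → Option S
  | none => some s
  | some t => some (s + t)

lemma optAct_comp {S : AddSubsemigroup ℝ} (s t : S) :
    optAct s ∘ optAct t = optAct (s + t) := by
  funext o
  cases o with
  | none => simp [optAct]
  | some r => simp [optAct, add_assoc]

def fwdSys (S : AddSubsemigroup ℝ) : DynSys S where
  X := Ultrafilter (Option S)
  T s := Ultrafilter.map (optAct s)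
  cont _ := continuous_umap _
  comp s t := by
    funext p
    show ((p.map (optAct t)).map (optAct s)) = p.map (optAct (s + t))
    rw [Ultrafilter.map_map, optAct_comp]

lemma mem_basic_T_none {S : AddSubsemigroup ℝ} {A' : Set (Option S)} {s : S}
    (hs : s ∈ some ⁻¹' A') :
    Ultrafilter.map (optAct s) (pure none) ∈ {q : Ultrafilter (Option S) | A' ∈ q} := by
  rw [mem_setOf_eq, Ultrafilter.map_pure, Ultrafilter.mem_pure]
  exact hs

lemma mem_basic_T_some {S : AddSubsemigroup ℝ} {A' : Set (Option S)} {u : Ultrafilter S} {s : S}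
    (hs : {b : S | s + b ∈ some ⁻¹' A'} ∈ u) :
    Ultrafilter.map (optAct s) (u.map some) ∈ {q : Ultrafilter (Option S) | A' ∈ q} := by
  rw [mem_setOf_eq, Ultrafilter.map_map, Ultrafilter.mem_map]
  exact hs

theorem forward_direction {B : Set S}
    (hdense : Set.Ioi (0 : ℝ) ⊆ closure (S : Set ℝ))
    (h : ∃ u ∈ KOplus S, uadd u u = u ∧ B ∈ u) :
    ∃ (D : DynSys S) (x y : D.X), ∃ U ∈ nhds y,
      proximalNearZero S D x y ∧ uniformlyRecurrentNearZero S D y ∧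
      B = {s : S | D.T s x ∈ U} := by
  obtain ⟨u, ⟨L, hLmin, huL⟩, hidem, hBu⟩ := h
  have huO : u ∈ Oplus S := hLmin.1.2.1 huL
  refine ⟨fwdSys S, pure none, u.map some, {p : Ultrafilter (Option S) | some '' B ∈ p},
    ?_, ?_, ?_, ?_⟩
  · -- U ∈ nhds y
    refine (ultrafilter_isOpen_basic _).mem_nhds ?_
    rw [mem_setOf_eq, Ultrafilter.mem_map,
      Set.preimage_image_eq B (Option.some_injective _)]
    exact hBu
  · -- proximal near zero
    have h1 : Tendsto (fun s : S => (fwdSys S).T s (pure none)) ↑u (nhds (u.map some)) := by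
      intro W hW
      obtain ⟨A', hA'y, hsub⟩ := ultra_mem_nhds.mp hW
      rw [mem_map]
      rw [Ultrafilter.mem_map] at hA'y
      exact Filter.mem_of_superset hA'y fun s hs => hsub (mem_basic_T_none hs)
    have h2 : Tendsto (fun s : S => (fwdSys S).T s (u.map some)) ↑u (nhds (u.map some)) := by
      intro W hW
      obtain ⟨A', hA'y, hsub⟩ := ultra_mem_nhds.mp hW
      rw [mem_map]
      rw [Ultrafilter.mem_map] at hA'y
      have hAuu : some ⁻¹' A' ∈ uadd u u := by rw [hidem]; exact hA'y
      rw [mem_uadd] at hAuu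
      exact Filter.mem_of_superset hAuu fun s hs => hsub (mem_basic_T_some hs)
    intro V hV ε hε
    have hVy : V ∈ nhds ((u.map some : Ultrafilter (Option S)), (u.map some : Ultrafilter (Option S))) :=
      nhds_le_nhdsSet (mem_diagonal _) hV
    have hpair := (h1.prodMk_nhds h2) hVy
    rw [mem_map] at hpair
    obtain ⟨s, hs1, hs2⟩ := Ultrafilter.nonempty_of_mem (inter_mem hpair (huO ε hε))
    exact ⟨s, hs2, hs1⟩
  · -- uniformly recurrent near zero
    intro W hW
    obtain ⟨A', hA'y, hsub⟩ := ultra_mem_nhds.mp hW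
    rw [Ultrafilter.mem_map] at hA'y
    have hsynd := syndetic_of_minimal hdense hLmin huL hA'y
    refine syndeticNearZero_mono ?_ hsynd
    intro s hs
    exact hsub (mem_basic_T_some hs)
  · -- B = {s | T s x ∈ U}
    ext s
    constructor
    · intro h
      exact mem_basic_T_none (mem_image_of_mem some h)
    · intro h
      have h2 : some '' B ∈ (Ultrafilter.map (optAct s) (pure none)) := h
      rw [Ultrafilter.map_pure, Ultrafilter.mem_pure] at h2
      obtain ⟨t, ht, he⟩ := h2
      exact (Option.some_injective _ he) ▸ ht

theorem reverse_direction {B : Set S}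
    (hdense : Set.Ioi (0 : ℝ) ⊆ closure (S : Set ℝ))
    (h : ∃ (D : DynSys S) (x y : D.X), ∃ U ∈ nhds y,
      proximalNearZero S D x y ∧ uniformlyRecurrentNearZero S D y ∧
      B = {s : S | D.T s x ∈ U}) :
    ∃ u ∈ KOplus S, uadd u u = u ∧ B ∈ u := by
  obtain ⟨D, x, y, U, hU, hprox, hur, hB⟩ := h
  obtain ⟨p, hpO, hpxy⟩ := prox_step hprox
  have hL0 := image_left_ideal hpO
  obtain ⟨L, hLL0, hLmin, hLclosed⟩ := exists_minimal_closed_left_ideal hL0.1 hL0.2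
  have hxy : ∀ q ∈ L, D.Tp q x = D.Tp q y := by
    intro q hq
    obtain ⟨r, hrO, rfl⟩ := hLL0 hq
    show D.Tp (uadd r p) x = D.Tp (uadd r p) y
    rw [Tp_uadd, Tp_uadd, hpxy]
  obtain ⟨q0, hq0⟩ := hLmin.1.1
  obtain ⟨r, hrO, hry⟩ := ur_step hur (hLmin.1.2.1 hq0)
  have hq1L : uadd r q0 ∈ L := hLmin.1.2.2 r hrO q0 hq0
  set M : Set (Ultrafilter S) := L ∩ (fun q => D.Tp q y) ⁻¹' {y} with hM
  have hMne : M.Nonempty := ⟨uadd r q0, hq1L, by simpa using hry⟩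
  have hMcl : IsClosed M :=
    hLclosed.inter (isClosed_singleton.preimage (continuous_Tp D y))
  have hMadd : ∀ q ∈ M, ∀ q' ∈ M, uadd q q' ∈ M := by
    rintro q ⟨hqL, hqy⟩ q' ⟨hq'L, hq'y⟩
    refine ⟨hLmin.1.2.2 q (hLmin.1.2.1 hqL) q' hq'L, ?_⟩
    simp only [mem_preimage, mem_singleton_iff] at hqy hq'y ⊢
    rw [Tp_uadd, hq'y, hqy]
  obtain ⟨u, huM, huidem⟩ := exists_uadd_idem hMne hMcl hMadd
  have huL : u ∈ L := huM.1
  have hTuy : D.Tp u y = y := by simpa using huM.2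
  have hTux : D.Tp u x = y := (hxy u huL).trans hTuy
  refine ⟨u, ⟨L, hLmin, huL⟩, huidem, ?_⟩
  have htend : Tendsto (fun s => D.T s x) ↑u (nhds y) := hTux ▸ Tp_tendsto D u x
  have hBu : {s : S | D.T s x ∈ U} ∈ u := htend hU
  rw [hB]
  exact hBu

theorem stmt8 (S : AddSubsemigroup ℝ)
    (hpos : ∀ x : ℝ, x ∈ S → 0 < x)
    (hdense : Set.Ioi (0 : ℝ) ⊆ closure (S : Set ℝ))
    (B : Set S) :
    (∃ u ∈ KOplus S, uadd u u = u ∧ B ∈ u) ↔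
      ∃ (D : DynSys S) (x y : D.X), ∃ U ∈ nhds y,
        proximalNearZero S D x y ∧ uniformlyRecurrentNearZero S D y ∧
        B = {s : S | D.T s x ∈ U} := by
  constructor
  · exact forward_direction hdense
  · exact reverse_direction hdense
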